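/- Let q ≥ 2, n ≥ 1, a ∈ ℤ_{qn}, and let VT*_a(n;q) = {x ∈ Σ_q^n : Syn(Diff(x)) ≡ a (mod qn)}. Then VT*_a(n;q) corrects a single deletion: for any two distinct codewords x, x̃ ∈ VT*_a(n;q), no sequence z ∈ Σ_q^{n-1} can be obtained both from x by deleting one coordinate and from x̃ by deleting one coordinate. -/

import Mathlib

/-- VT syndrome of a sequence (1-indexed): `Syn(y) = ∑ i * y_i`. -/
def synL (l : List ℕ) : ℕ := ∑ i ∈ Finset.range l.length, (i + 1) * l.getD i 0

/-- Differential vector: `Diff(x)_i = x_i - x_{i+1} (mod q)` for `i < n`, `Diff(x)_n = x_n`. -/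
def diffL (q : ℕ) (x : List ℕ) : List ℕ :=
  List.ofFn fun i : Fin x.length =>
    if i.1 + 1 < x.length then
      (((x.getD i.1 0 : ℤ) - (x.getD (i.1 + 1) 0 : ℤ)) % (q : ℤ)).toNat
    else x.getD i.1 0

/-! Since `Diff(x)_i = x_i - x_{i+1} + q·[x_i < x_{i+1}]`, telescoping gives
`Syn(Diff x) = Σ x + q · Syn(α x)`, where `α x ∈ {0,1}^{n-1}` records the ascents of `x`.
If `x` and `x'` arise from `z` by inserting `s` and `s'`, reducing modulo `q` gives `s = s'`,
and then `Syn(α x) ≡ Syn(α x') (mod n)`. An insertion into `z` is a single insertion into `α z`,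
so Levenshtein's theorem for the binary VT code of length `n - 1` gives `α x = α x'`. Finally,
moving `s` from one position to another keeps the ascent pattern only if the window in between,
read cyclically from `s` back to `s`, is strictly increasing (impossible) or non-increasing,
hence constantly `s`. -/

theorem List.sum_range_getD (l : List ℕ) : ∑ i ∈ Finset.range l.length, l.getD i 0 = l.sum := by
  induction l with
  | nil => rfl
  | cons a l ih =>
    simp only [List.length_cons, Finset.sum_range_succ', List.getD_cons_succ,
      List.getD_cons_zero, ih, List.sum_cons, add_comm]

theorem synL_cons (a : ℕ) (l : List ℕ) : synL (a :: l) = a + synL l + l.sum := by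
  simp only [synL, List.length_cons, Finset.sum_range_succ', List.getD_cons_succ,
    List.getD_cons_zero, ← List.sum_range_getD, add_mul, one_mul, Finset.sum_add_distrib]
  ring

theorem synL_nil : synL [] = 0 := rfl

theorem synL_insertIdx : ∀ {w : List ℕ} {i : ℕ}, i ≤ w.length → ∀ b,
    synL (w.insertIdx i b) = synL w + ((i + 1) * b + (w.drop i).sum)
  | w, 0, _, b => by simp only [List.insertIdx_zero, synL_cons, List.drop_zero]; ring
  | a :: w, i + 1, hi, b => by
    have hi' : i ≤ w.length := by simpa using hi
    simp only [List.insertIdx_succ_cons, synL_cons, List.CommMonoid.sum_insertIdx hi',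
      synL_insertIdx hi', List.drop_succ_cons]
    ring

theorem diffL_singleton (q a : ℕ) : diffL q [a] = [a] := rfl

theorem diffL_cons_cons (q a b : ℕ) (l : List ℕ) :
    diffL q (a :: b :: l) = ((a - b : ℤ) % q).toNat :: diffL q (b :: l) := by
  simp [diffL, List.ofFn_succ]

def ascents : List ℕ → List ℕ
  | a :: b :: l => (if a < b then 1 else 0) :: ascents (b :: l)
  | _ => []

theorem toNat_sub_emod_add {q a b : ℕ} (ha : a < q) (hb : b < q) :
    ((a - b : ℤ) % q).toNat + b = a + q * if a < b then 1 else 0 := by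
  split_ifs with hab
  · rw [← Int.add_emod_right, Int.emod_eq_of_lt (by omega) (by omega)]
    omega
  · rw [Int.emod_eq_of_lt (by omega) (by omega)]
    omega

theorem sum_diffL {q : ℕ} : ∀ {x : List ℕ}, (∀ b ∈ x, b < q) →
    (diffL q x).sum = x.headD 0 + q * (ascents x).sum
  | [], _ => rfl
  | [a], _ => by simp [diffL_singleton, ascents]
  | a :: b :: l, hx => by
    have ih := sum_diffL (x := b :: l) (fun c hc => hx c (List.mem_cons_of_mem a hc))
    have key := toNat_sub_emod_add (hx a (by simp)) (hx b (by simp))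
    simp only [diffL_cons_cons, ascents, List.sum_cons, List.headD_cons] at ih ⊢
    linear_combination ih + key

theorem synL_diffL {q : ℕ} : ∀ {x : List ℕ}, (∀ b ∈ x, b < q) →
    synL (diffL q x) = x.sum + q * synL (ascents x)
  | [], _ => rfl
  | [a], _ => by simp [diffL_singleton, ascents, synL_cons, synL_nil]
  | a :: b :: l, hx => by
    have hbl : ∀ c ∈ b :: l, c < q := fun c hc => hx c (List.mem_cons_of_mem a hc)
    have ih := synL_diffL hbl
    have hsum := sum_diffL hbl
    have key := toNat_sub_emod_add (hx a (by simp)) (hx b (by simp))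
    simp only [diffL_cons_cons, ascents, synL_cons, List.sum_cons, List.headD_cons] at ih hsum ⊢
    linear_combination ih + hsum + key

theorem List.insertIdx_eq_insertIdx_of_forall_mem {α : Type*} {b : α} :
    ∀ {w : List α} {i j : ℕ}, i ≤ j → j ≤ w.length →
      (∀ a ∈ (w.drop i).take (j - i), a = b) → w.insertIdx i b = w.insertIdx j b
  | [], i, j, hij, hj, _ => by
    obtain rfl : j = 0 := by simpa using hj
    obtain rfl : i = 0 := by omega
    rfl
  | _ :: _, 0, 0, _, _, _ => rfl
  | a :: w, 0, j + 1, _, hj, h => by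
    simp only [List.drop_zero, Nat.sub_zero, List.take_succ_cons, List.mem_cons,
      forall_eq_or_imp] at h
    rw [List.insertIdx_succ_cons, ← insertIdx_eq_insertIdx_of_forall_mem (Nat.zero_le j)
      (by simpa using hj) (by simpa using h.2), h.1]
    rfl
  | a :: w, i + 1, j + 1, hij, hj, h => by
    rw [List.insertIdx_succ_cons, List.insertIdx_succ_cons,
      insertIdx_eq_insertIdx_of_forall_mem (i := i) (j := j) (by omega) (by simpa using hj)
        (by simpa using h)]

theorem List.forall_eq_one_of_sum_eq_length :
    ∀ {l : List ℕ}, (∀ a ∈ l, a ≤ 1) → l.sum = l.length → ∀ a ∈ l, a = 1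
  | [], _, _ => by simp
  | a :: l, h, hs => by
    have hl := List.sum_le_card_nsmul l 1 fun b hb => h b (List.mem_cons_of_mem a hb)
    have ha := h a List.mem_cons_self
    simp only [List.sum_cons, List.length_cons, smul_eq_mul, mul_one] at hs hl
    simp only [List.mem_cons, forall_eq_or_imp]
    exact ⟨by omega, forall_eq_one_of_sum_eq_length (fun b hb => h b (List.mem_cons_of_mem a hb))
      (by omega)⟩

/-- Levenshtein: the syndrome gain `(i + 1) * b + Σ_{k ≥ i} w_k` of an insertion lies in
`[0, |w| + 1]`, so both gains are equal; this forces `b = c` and makes `w` constantly `b` between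
the two insertion points. -/
theorem insertIdx_eq_of_synL_modEq {w : List ℕ} (hw : ∀ a ∈ w, a ≤ 1) {i j b c : ℕ}
    (hb : b ≤ 1) (hc : c ≤ 1) (hi : i ≤ w.length) (hj : j ≤ w.length)
    (h : synL (w.insertIdx i b) ≡ synL (w.insertIdx j c) [MOD w.length + 2]) :
    w.insertIdx i b = w.insertIdx j c := by
  wlog hij : i ≤ j generalizing i j b c
  · exact (this hc hb hj hi h.symm (by omega)).symm
  have hbits : ∀ k, (w.drop k).sum ≤ w.length - k := fun k => by
    simpa using List.sum_le_card_nsmul (w.drop k) 1 fun a ha => hw a (List.mem_of_mem_drop ha)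
  rw [synL_insertIdx hi, synL_insertIdx hj] at h
  have hD := (Nat.ModEq.add_left_cancel' _ h).eq_of_lt_of_lt
    (by have := hbits i; have := Nat.mul_le_mul_left (i + 1) hb; omega)
    (by have := hbits j; have := Nat.mul_le_mul_left (j + 1) hc; omega)
  set seg := (w.drop i).take (j - i)
  have hseg : (w.drop i).sum = seg.sum + (w.drop j).sum := by
    rw [← List.sum_take_add_sum_drop (w.drop i) (j - i), List.drop_drop, Nat.add_sub_cancel' hij]
  have hseg_bits : ∀ a ∈ seg, a ≤ 1 := fun a ha =>
    hw a (List.mem_of_mem_drop (List.mem_of_mem_take ha))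
  have hseg_len : seg.length = j - i := by simp [seg]; omega
  have hseg_le : seg.sum ≤ seg.length := by
    simpa using List.sum_le_card_nsmul seg 1 hseg_bits
  obtain rfl : b = c := by interval_cases b <;> interval_cases c <;> omega
  refine List.insertIdx_eq_insertIdx_of_forall_mem hij hj (show ∀ a ∈ seg, a = b from ?_)
  rcases Nat.le_one_iff_eq_zero_or_eq_one.mp hb with rfl | rfl
  · exact List.sum_eq_zero_iff.mp (by omega)
  · exact List.forall_eq_one_of_sum_eq_length hseg_bits (by omega)

theorem length_ascents : ∀ l : List ℕ, (ascents l).length = l.length - 1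
  | [] | [_] => rfl
  | a :: b :: l => by simp [ascents, length_ascents (b :: l)]

theorem le_one_of_mem_ascents : ∀ {l : List ℕ}, ∀ a ∈ ascents l, a ≤ 1
  | [] | [_] => by simp [ascents]
  | a :: b :: l => by
    simp only [ascents, List.mem_cons, forall_eq_or_imp]
    exact ⟨by split_ifs <;> simp, le_one_of_mem_ascents⟩

theorem tail_ascents_cons (a : ℕ) : ∀ l : List ℕ, (ascents (a :: l)).tail = ascents l
  | [] | _ :: _ => rfl

theorem ascents_insertIdx (s : ℕ) : ∀ {z : List ℕ} {i : ℕ}, z ≠ [] → i ≤ z.length →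
    ∃ j ≤ (ascents z).length, ∃ b, ascents (z.insertIdx i s) = (ascents z).insertIdx j b
  | a :: _, 0, _, _ => ⟨0, Nat.zero_le _, if s < a then 1 else 0, rfl⟩
  | [a], 1, _, _ => ⟨0, le_rfl, if a < s then 1 else 0, rfl⟩
  | a :: c :: l, 1, _, _ => by
    -- the old bit `[a < c]` survives as one of the new bits `[a < s]`, `[s < c]`
    by_cases h : (a < c ↔ s < c)
    · refine ⟨0, Nat.zero_le _, if a < s then 1 else 0, ?_⟩
      simp [ascents, h]
    · refine ⟨1, by simp [ascents], if s < c then 1 else 0, ?_⟩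
      have : (a < c ↔ a < s) := by omega
      simp [ascents, this]
  | a :: c :: l, i + 2, _, hi => by
    obtain ⟨j, hj, b, h⟩ := ascents_insertIdx s (z := c :: l) (i := i + 1) (List.cons_ne_nil _ _)
      (by simpa using hi)
    refine ⟨j + 1, by simpa [ascents] using hj, b, ?_⟩
    simp only [List.insertIdx_succ_cons] at h ⊢
    simp [ascents, h]

/-- Moving `s` from the front of `a :: w` to position `k + 1` keeps the ascents only if
`t, a, w_0, …, w_{k-1}, s` is strictly increasing or non-increasing. -/
theorem lt_or_forall_mem_of_ascents_eq (s : ℕ) : ∀ {t a : ℕ} {w : List ℕ} {k : ℕ},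
    k ≤ w.length → ascents (t :: a :: w) = ascents ((a :: w).insertIdx (k + 1) s) →
      (t < a ∧ t < s) ∨ ∀ b ∈ a :: w.take k, s ≤ b ∧ b ≤ t
  | t, a, w, 0, _, h => by
    have hbit := congrArg List.head? h
    simp only [ascents, List.insertIdx_succ_cons, List.insertIdx_zero, List.head?_cons,
      Option.some.injEq] at hbit
    simp only [List.take_zero, List.mem_singleton, forall_eq]
    split_ifs at hbit <;> omega
  | t, a, c :: w, k + 1, hk, h => by
    have hbit := congrArg List.head? h
    have htail := congrArg List.tail h
    simp only [ascents, List.insertIdx_succ_cons, List.head?_cons, Option.some.injEq] at hbit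
    rw [tail_ascents_cons, List.insertIdx_succ_cons, tail_ascents_cons] at htail
    have ih := lt_or_forall_mem_of_ascents_eq s (by simpa using hk) htail
    simp only [List.take_succ_cons, List.mem_cons, forall_eq_or_imp] at ih ⊢
    split_ifs at hbit with hta hac <;> rcases ih with ⟨hac', has⟩ | ⟨hc, hall⟩
    · exact .inl ⟨hta, by omega⟩
    · omega
    · omega
    · refine .inr ⟨by omega, by omega, fun b hb => ?_⟩
      have := hall b hb
      omega

theorem forall_mem_eq_of_ascents_insertIdx_eq {s : ℕ} : ∀ {z : List ℕ} {i j : ℕ}, i ≤ j →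
    j ≤ z.length → ascents (z.insertIdx i s) = ascents (z.insertIdx j s) →
      ∀ a ∈ (z.drop i).take (j - i), a = s
  | _, 0, 0, _, _, _ => by simp
  | a :: w, 0, k + 1, _, hj, h => by
    rcases lt_or_forall_mem_of_ascents_eq s (by simpa using hj) h with ⟨-, hss⟩ | hall
    · exact absurd hss (lt_irrefl s)
    · intro b hb
      have := hall b (by simpa using hb)
      omega
  | a :: w, i + 1, j + 1, hij, hj, h => by
    have htail := congrArg List.tail h
    simp only [List.insertIdx_succ_cons, tail_ascents_cons] at htail
    simpa using forall_mem_eq_of_ascents_insertIdx_eq (by omega) (by simpa using hj) htail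
  | [], _, _ + 1, _, hj, _ => by simp at hj
  | _, _ + 1, 0, hij, _, _ => by omega

theorem insertIdx_eq_of_ascents_eq {z : List ℕ} {i j s : ℕ} (hi : i ≤ z.length)
    (hj : j ≤ z.length) (h : ascents (z.insertIdx i s) = ascents (z.insertIdx j s)) :
    z.insertIdx i s = z.insertIdx j s := by
  rcases le_total i j with hij | hji
  · exact List.insertIdx_eq_insertIdx_of_forall_mem hij hj
      (forall_mem_eq_of_ascents_insertIdx_eq hij hj h)
  · exact (List.insertIdx_eq_insertIdx_of_forall_mem hji hi
      (forall_mem_eq_of_ascents_insertIdx_eq hji hi h.symm)).symm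

theorem ascents_eq_of_synL_modEq {z : List ℕ} {i j s : ℕ} (hi : i ≤ z.length)
    (hj : j ≤ z.length)
    (h : synL (ascents (z.insertIdx i s)) ≡ synL (ascents (z.insertIdx j s)) [MOD z.length + 1]) :
    ascents (z.insertIdx i s) = ascents (z.insertIdx j s) := by
  rcases eq_or_ne z [] with rfl | hz
  · obtain ⟨rfl, rfl⟩ : i = 0 ∧ j = 0 := by simp_all
    rfl
  obtain ⟨k, hk, b, hb⟩ := ascents_insertIdx s hz hi
  obtain ⟨k', hk', b', hb'⟩ := ascents_insertIdx s hz hj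
  have hlen : (ascents z).length + 2 = z.length + 1 := by
    have := List.length_pos_of_ne_nil hz
    rw [length_ascents]
    omega
  have hb1 := le_one_of_mem_ascents b (hb ▸ (List.mem_insertIdx hk).2 (.inl rfl))
  have hb1' := le_one_of_mem_ascents b' (hb' ▸ (List.mem_insertIdx hk').2 (.inl rfl))
  rw [hb, hb'] at h ⊢
  exact insertIdx_eq_of_synL_modEq le_one_of_mem_ascents hb1 hb1' hk hk' (hlen ▸ h)

theorem insertIdx_eq_of_synL_diffL_modEq {q : ℕ} {z : List ℕ} {i j s t : ℕ}
    (hz : ∀ a ∈ z, a < q) (hs : s < q) (ht : t < q) (hi : i ≤ z.length) (hj : j ≤ z.length)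
    (h : synL (diffL q (z.insertIdx i s)) ≡ synL (diffL q (z.insertIdx j t))
      [MOD q * (z.length + 1)]) :
    z.insertIdx i s = z.insertIdx j t := by
  have hmem : ∀ {k u}, k ≤ z.length → u < q → ∀ a ∈ z.insertIdx k u, a < q :=
    fun hk hu a ha => ((List.mem_insertIdx hk).1 ha).elim (· ▸ hu) (hz a)
  rw [synL_diffL (hmem hi hs), synL_diffL (hmem hj ht), List.CommMonoid.sum_insertIdx hi,
    List.CommMonoid.sum_insertIdx hj] at h
  obtain rfl : s = t := by
    have hq := h.of_mul_right (z.length + 1)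
    simp only [Nat.ModEq, Nat.add_mul_mod_self_left] at hq
    exact (Nat.ModEq.add_right_cancel' _ hq).eq_of_lt_of_lt hs ht
  have hW := Nat.ModEq.mul_left_cancel' (by omega : q ≠ 0) (Nat.ModEq.add_left_cancel' _ h)
  exact insertIdx_eq_of_ascents_eq hi hj (ascents_eq_of_synL_modEq hi hj hW)

theorem stmt_13_general (q n a : ℕ)
    (x x' : List ℕ)
    (hxlen : x.length = n) (hxq : ∀ b ∈ x, b < q)
    (hx'len : x'.length = n) (hx'q : ∀ b ∈ x', b < q)
    (hxsyn : synL (diffL q x) % (q * n) = a)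
    (hx'syn : synL (diffL q x') % (q * n) = a)
    (hne : x ≠ x') :
    ¬ ∃ z : List ℕ, (∃ i < n, z = x.eraseIdx i) ∧ (∃ i < n, z = x'.eraseIdx i) := by
  rintro ⟨z, ⟨i, hi, rfl⟩, ⟨i', hi', hz⟩⟩
  have hx := List.insertIdx_eraseIdx_getElem (hxlen ▸ hi)
  have hx' := List.insertIdx_eraseIdx_getElem (hx'len ▸ hi')
  have hzlen : (x.eraseIdx i).length + 1 = n := by
    rw [List.length_eraseIdx_of_lt (hxlen ▸ hi)]
    omega
  rw [← hz] at hx'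
  refine hne (hx.symm.trans (Eq.trans ?_ hx'))
  refine insertIdx_eq_of_synL_diffL_modEq (fun b hb => hxq b (List.mem_of_mem_eraseIdx hb))
    (hxq _ (List.getElem_mem _)) (hx'q _ (List.getElem_mem _)) (by omega) (by omega) ?_
  rw [hx, hx', hzlen]
  exact hxsyn.trans hx'syn.symm

theorem stmt_13 (q n a : ℕ) (hq : 2 ≤ q) (hn : 1 ≤ n) (ha : a < q * n)
    (x x' : List ℕ)
    (hxlen : x.length = n) (hxq : ∀ b ∈ x, b < q)
    (hx'len : x'.length = n) (hx'q : ∀ b ∈ x', b < q)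
    (hxsyn : synL (diffL q x) % (q * n) = a)
    (hx'syn : synL (diffL q x') % (q * n) = a)
    (hne : x ≠ x') :
    ¬ ∃ z : List ℕ, (∃ i < n, z = x.eraseIdx i) ∧ (∃ i < n, z = x'.eraseIdx i) :=
  stmt_13_general q n a x x' hxlen hxq hx'len hx'q hxsyn hx'syn hne
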